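/- Let n ≥ 2 and let x_1 ≤ x_2 ≤ ... ≤ x_n be real numbers, not all equal. With x̄ the mean and s² = (1/(n-1))∑(x_i - x̄)², the sample range satisfies x_n - x_1 ≤ √(2(n-1)) · s. -/

import Mathlib

theorem range_upper_bound (n : ℕ) (hn : 2 ≤ n) (x : Fin n → ℝ)
    (hmono : Monotone x) (hne : ∃ i j, x i ≠ x j) :
    x ⟨n - 1, by omega⟩ - x ⟨0, by omega⟩
      ≤ Real.sqrt (2 * ((n : ℝ) - 1)) *
          Real.sqrt ((1 / ((n : ℝ) - 1)) * ∑ i, (x i - (∑ j, x j) / n) ^ 2) := by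
  set m : ℝ := (∑ j, x j) / n with hm
  set S : ℝ := ∑ i, (x i - m) ^ 2 with hS
  have hS0 : 0 ≤ S := Finset.sum_nonneg fun i _ => sq_nonneg _
  have hn1 : (0:ℝ) < (n : ℝ) - 1 := by
    have : (2:ℝ) ≤ n := by exact_mod_cast hn
    linarith
  have hsqrt : Real.sqrt (2 * ((n : ℝ) - 1)) * Real.sqrt ((1 / ((n : ℝ) - 1)) * S)
      = Real.sqrt (2 * S) := by
    rw [← Real.sqrt_mul (by positivity)]
    congr 1
    field_simp
  rw [hsqrt]
  set i0 : Fin n := ⟨0, by omega⟩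
  set iN : Fin n := ⟨n - 1, by omega⟩
  have hij : iN ≠ i0 := by
    simp only [i0, iN, Fin.ne_iff_vne]
    omega
  have hle : x i0 ≤ x iN := hmono (by simp [i0, iN, Fin.le_iff_val_le_val])
  have hpair : (x iN - m) ^ 2 + (x i0 - m) ^ 2 ≤ S := by
    have := Finset.sum_le_univ_sum_of_nonneg
      (s := {iN, i0}) (f := fun i => (x i - m) ^ 2)
      (fun i => sq_nonneg _)
    rwa [Finset.sum_pair hij] at this
  have hsq : (x iN - x i0) ^ 2 ≤ 2 * S := by nlinarith [hpair, sq_nonneg (x iN + x i0 - 2*m)]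
  calc x iN - x i0 = Real.sqrt ((x iN - x i0) ^ 2) := by
        rw [Real.sqrt_sq (by linarith)]
    _ ≤ Real.sqrt (2 * S) := Real.sqrt_le_sqrt hsq
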